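/- For every real s with -2 < s and s ≠ 0, the second discrete derivative of the minimal average standardized Riesz pair-energy at N = 5 satisfies the lower bound v_s(4) - 2·v_s(5) + v_s(6) ≥ (1/s)·( (3/8)^{s/2} - (2/5)·(1/2)^{s/2} - (3/5)·(1/3)^{s/2} ). -/

import Mathlib

open scoped BigOperators

/-- The standardized Riesz pair-energy `V_s(r) = (r^{-s} - 1)/s` for `s ≠ 0`,
and `V_0(r) = -log r`. -/
noncomputable def Vpair (s r : ℝ) : ℝ := if s = 0 then -Real.log r else (r ^ (-s) - 1) / s

/-- The average standardized Riesz pair-energy of an `N`-point configuration on the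
unit sphere `S² ⊂ ℝ³`. -/
noncomputable def avgE (s : ℝ) (N : ℕ) (q : Fin N → EuclideanSpace ℝ (Fin 3)) : ℝ :=
  2 / ((N : ℝ) * ((N : ℝ) - 1)) *
    ∑ i : Fin N, ∑ j : Fin N, if i < j then Vpair s ‖q i - q j‖ else 0

/-- The minimal average standardized Riesz pair-energy `v_s(N)`: the infimum of the
average pair-energy over all configurations of `N` pairwise distinct points on `S²`. -/
noncomputable def vmin (s : ℝ) (N : ℕ) : ℝ :=
  sInf { E : ℝ | ∃ q : Fin N → EuclideanSpace ℝ (Fin 3),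
    (∀ i, ‖q i‖ = 1) ∧ Function.Injective q ∧ E = avgE s N q }

/-!
The lower bounds for `v_s(4)` and `v_s(6)` are Delsarte–Yudin linear programming bounds. Writing
the pair energy of unit vectors as a function `g` of their inner product `t`, any
`p(t) = a + b t + c t²` with `b, c ≥ 0` and `p ≤ g` on `[-1, 1)` bounds the average energy of `N`
points from below, because `∑ᵢⱼ ⟪qᵢ, qⱼ⟫ = ‖∑ᵢ qᵢ‖² ≥ 0` and `∑ᵢⱼ ⟪qᵢ, qⱼ⟫² ≥ N² / 3`. For
`s > -2` both `g` and `g'` are convex, so for `N = 4` the tangent line of `g` at `-1/3` works, and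
for `N = 6` the quadratic Hermite interpolant of `g` at `-1, 0, 0`. The bound for `v_s(5)` is the
energy of the triangular bipyramid, whose inner products are `-1` once, `0` six times and `-1/2`
three times; its `g(-1)` term cancels against the octahedral bound.
-/

open Set Real
open scoped InnerProductSpace

/-- The pair energy `Vpair s ‖u - v‖` of unit vectors `u, v` written as a function of
`t = ⟪u, v⟫`, via `‖u - v‖ ^ 2 = 2 - 2 * t`. -/
noncomputable def innerPotential (s t : ℝ) : ℝ := ((2 - 2 * t) ^ (-s / 2) - 1) / s

theorem ConvexOn.add_mul_sub_le_of_hasDerivAt {S : Set ℝ} {f : ℝ → ℝ} {f' x y : ℝ}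
    (hf : ConvexOn ℝ S f) (hx : x ∈ S) (hy : y ∈ S) (hd : HasDerivAt f f' x) :
    f x + f' * (y - x) ≤ f y := by
  rcases lt_trichotomy x y with h | rfl | h
  · have := hf.le_slope_of_hasDerivAt hx hy h hd
    rw [slope_def_field, le_div_iff₀ (sub_pos.2 h)] at this
    linarith
  · simp
  · have := hf.slope_le_of_hasDerivAt hy hx h hd
    rw [slope_def_field, div_le_iff₀ (sub_pos.2 h)] at this
    linarith

theorem convexOn_Iio_of_hasDerivAt_of_nonneg {u : ℝ} {f f' f'' : ℝ → ℝ}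
    (hf : ∀ x < u, HasDerivAt f (f' x) x) (hf' : ∀ x < u, HasDerivAt f' (f'' x) x)
    (hf'' : ∀ x < u, 0 ≤ f'' x) : ConvexOn ℝ (Iio u) f := by
  refine convexOn_of_hasDerivWithinAt2_nonneg (f' := f') (f'' := f'') (convex_Iio u)
    (fun x hx => (hf x hx).continuousAt.continuousWithinAt) ?_ ?_ ?_ <;>
    simp only [interior_Iio, mem_Iio]
  · exact fun x hx => (hf x hx).hasDerivWithinAt
  · exact fun x hx => (hf' x hx).hasDerivWithinAt
  · exact hf''

theorem le_of_hasDerivAt_of_nonneg {F F' : ℝ → ℝ} {x y : ℝ} (hxy : x ≤ y)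
    (hF : ∀ z ∈ Icc x y, HasDerivAt F (F' z) z) (hF' : ∀ z ∈ Ioo x y, 0 ≤ F' z) :
    F x ≤ F y := by
  refine monotoneOn_of_hasDerivWithinAt_nonneg (convex_Icc x y)
    (fun z hz => (hF z hz).continuousAt.continuousWithinAt) ?_ (by rwa [interior_Icc])
    ⟨le_rfl, hxy⟩ ⟨hxy, le_rfl⟩ hxy
  rw [interior_Icc]
  exact fun z hz => (hF z (Ioo_subset_Icc_self hz)).hasDerivWithinAt

/-- Rolle gives a zero `c ∈ (a, b)` of `F'`; as `F'` is convex and vanishes at `c` and `b`, it is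
nonnegative on `[a, c]` and on `[b, u)` and nonpositive on `[c, b]`, so `F` rises from `F a = 0`,
falls to `F b = 0` and rises again. -/
theorem nonneg_of_convexOn_deriv {u a b : ℝ} {F F' : ℝ → ℝ}
    (hF : ∀ x < u, HasDerivAt F (F' x) x) (hconv : ConvexOn ℝ (Iio u) F')
    (hab : a < b) (hbu : b < u) (ha : F a = 0) (hb : F b = 0) (hb' : F' b = 0)
    {t : ℝ} (hat : a ≤ t) (htu : t < u) : 0 ≤ F t := by
  obtain ⟨c, ⟨hac, hcb⟩, hc⟩ : ∃ c ∈ Ioo a b, F' c = 0 :=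
    exists_hasDerivAt_eq_zero hab
      (fun x hx => (hF x (hx.2.trans_lt hbu)).continuousAt.continuousWithinAt)
      (ha.trans hb.symm) fun x hx => hF x (hx.2.trans hbu)
  have hcu : c < u := hcb.trans hbu
  rcases le_total t c with htc | hct
  · rw [← ha]
    refine le_of_hasDerivAt_of_nonneg hat (fun z hz => hF z (hz.2.trans_lt (htc.trans_lt hcu)))
      fun z hz => ?_
    rw [← hc]
    exact hconv.le_left_of_right_le'' (hz.2.trans_le htc |>.trans hcu) hbu (hz.2.le.trans htc) hcb
      (by rw [hb', hc])
  rcases le_total t b with htb | hbt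
  · rw [← hb]
    suffices -F t ≤ -F b by linarith
    refine le_of_hasDerivAt_of_nonneg (F := fun z => -F z) (F' := fun z => -F' z) htb
      (fun z hz => (hF z (hz.2.trans_lt hbu)).neg) fun z hz => ?_
    have := hconv.le_max_of_mem_Icc hcu hbu ⟨hct.trans hz.1.le, hz.2.le⟩
    rw [hc, hb', max_self] at this
    exact neg_nonneg.2 this
  · rw [← hb]
    refine le_of_hasDerivAt_of_nonneg hbt (fun z hz => hF z (hz.2.trans_lt htu)) fun z hz => ?_
    rw [← hb']
    exact hconv.le_right_of_left_le'' hcu (hz.2.trans htu) hcb hz.1.le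
      (by rw [hb', hc])

/-- The left-hand side is the quadratic Hermite interpolant of `f` at the nodes `a, b, b`. -/
theorem hermite_le_of_convexOn_deriv {u a b : ℝ} {f f' : ℝ → ℝ}
    (hf : ∀ x < u, HasDerivAt f (f' x) x) (hconv : ConvexOn ℝ (Iio u) f')
    (hab : a < b) (hbu : b < u) {t : ℝ} (hat : a ≤ t) (htu : t < u) :
    f b + f' b * (t - b) + (f a - f b - f' b * (a - b)) / (a - b) ^ 2 * (t - b) ^ 2 ≤ f t := by
  set c := (f a - f b - f' b * (a - b)) / (a - b) ^ 2 with hc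
  have hline : ConcaveOn ℝ (Iio u) fun x => f' b + 2 * c * (x - b) :=
    (((LinearMap.mul ℝ ℝ (2 * c)).concaveOn (convex_Iio u)).add_const (f' b - 2 * c * b)).congr
      fun x _ => by rw [Pi.add_apply, LinearMap.mul_apply']; ring
  have hF : ∀ x < u, HasDerivAt (fun x => f x - (f b + f' b * (x - b) + c * (x - b) ^ 2))
      (f' x - (f' b + 2 * c * (x - b))) x := fun x hx => by
    have h := (hasDerivAt_id' x).sub_const b
    refine (hf x hx).sub ((((h.const_mul (f' b)).const_add (f b)).add
      ((h.pow 2).const_mul c)).congr_deriv ?_)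
    simp only [mul_one, Nat.cast_ofNat, Nat.add_one_sub_one, pow_one, add_right_inj]
    ring
  have := nonneg_of_convexOn_deriv hF (hconv.sub hline) hab hbu
    (by rw [hc]; field_simp [sub_ne_zero.2 hab.ne]; ring) (by simp) (by simp) hat htu
  linarith

theorem hasDerivAt_rpow_two_sub_two_mul (p : ℝ) {t : ℝ} (ht : t < 1) :
    HasDerivAt (fun t => (2 - 2 * t) ^ p) (-2 * p * (2 - 2 * t) ^ (p - 1)) t := by
  have h := ((hasDerivAt_id' t).const_mul 2).const_sub 2
  exact (h.rpow_const (Or.inl (by linarith))).congr_deriv (by ring)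

theorem convexOn_rpow_two_sub_two_mul {p : ℝ} (hp : p ≤ 0) :
    ConvexOn ℝ (Iio 1) fun t : ℝ => (2 - 2 * t) ^ p :=
  convexOn_Iio_of_hasDerivAt_of_nonneg (fun t ht => hasDerivAt_rpow_two_sub_two_mul p ht)
    (fun t ht => ((hasDerivAt_rpow_two_sub_two_mul (p - 1) ht).const_mul (-2 * p)))
    fun t ht => mul_nonneg (by linarith) (mul_nonneg (by linarith) (rpow_nonneg (by linarith) _))

section innerPotential

variable {s : ℝ}

theorem hasDerivAt_innerPotential (hs0 : s ≠ 0) {t : ℝ} (ht : t < 1) :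
    HasDerivAt (innerPotential s) ((2 - 2 * t) ^ (-s / 2 - 1)) t :=
  (((hasDerivAt_rpow_two_sub_two_mul (-s / 2) ht).sub_const 1).div_const s).congr_deriv
    (by field_simp)

theorem convexOn_deriv_innerPotential (hs : -2 ≤ s) :
    ConvexOn ℝ (Iio 1) fun t : ℝ => (2 - 2 * t) ^ (-s / 2 - 1) :=
  convexOn_rpow_two_sub_two_mul (by linarith)

theorem convexOn_innerPotential (hs : -2 ≤ s) (hs0 : s ≠ 0) :
    ConvexOn ℝ (Iio 1) (innerPotential s) :=
  convexOn_Iio_of_hasDerivAt_of_nonneg (fun t ht => hasDerivAt_innerPotential hs0 ht)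
    (fun t ht => hasDerivAt_rpow_two_sub_two_mul _ ht) fun t ht =>
      mul_nonneg (by linarith) (rpow_nonneg (by linarith) _)

theorem innerPotential_eq {t : ℝ} (ht : t < 1) :
    innerPotential s t = ((1 / (2 - 2 * t)) ^ (s / 2) - 1) / s := by
  rw [innerPotential, one_div, inv_rpow (by linarith), ← rpow_neg (by linarith), neg_div]

end innerPotential

theorem Vpair_norm_sub_eq_innerPotential {E : Type*} [NormedAddCommGroup E]
    [InnerProductSpace ℝ E] {s : ℝ} (hs0 : s ≠ 0) {u v : E} (hu : ‖u‖ = 1) (hv : ‖v‖ = 1) :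
    Vpair s ‖u - v‖ = innerPotential s ⟪u, v⟫_ℝ := by
  have hsq : ‖u - v‖ ^ 2 = 2 - 2 * ⟪u, v⟫_ℝ := by rw [norm_sub_sq_real, hu, hv]; ring
  rw [Vpair, if_neg hs0, innerPotential, ← hsq, ← rpow_natCast, ← rpow_mul (norm_nonneg _)]
  congr 3
  push_cast
  ring

theorem sum_sum_ite_lt_eq {ι : Type*} [Fintype ι] [LinearOrder ι] (f : ι → ι → ℝ)
    (hf : ∀ i j, f i j = f j i) :
    ∑ i, ∑ j, (if i < j then f i j else 0) = (∑ i, ∑ j, f i j - ∑ i, f i i) / 2 := by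
  have hsplit : ∀ i j, f i j =
      (if i < j then f i j else 0) + (if j < i then f j i else 0) + (if i = j then f i j else 0) :=
    fun i j => by
      rcases lt_trichotomy i j with h | rfl | h
      · simp [h, h.not_gt, h.ne]
      · simp
      · simp [h, h.not_gt, h.ne', hf i j]
  have hswap : ∑ i, ∑ j, (if j < i then f j i else 0) = ∑ i, ∑ j, (if i < j then f i j else 0) :=
    Finset.sum_comm
  simp_rw [Finset.sum_congr rfl fun i _ => Finset.sum_congr rfl fun j _ => hsplit i j]
  simp only [Finset.sum_add_distrib, hswap, Finset.sum_ite_eq, Finset.mem_univ, if_true]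
  ring

theorem sum_sum_inner_nonneg {E ι : Type*} [NormedAddCommGroup E] [InnerProductSpace ℝ E]
    [Fintype ι] (q : ι → E) : 0 ≤ ∑ i, ∑ j, ⟪q i, q j⟫_ℝ := by
  have := real_inner_self_nonneg (x := ∑ i, q i)
  rwa [sum_inner, Finset.sum_congr rfl fun i _ => inner_sum _ _ _] at this

theorem sum_sum_sq_sum_mul_comm {ι κ : Type*} [Fintype ι] [Fintype κ] (x : ι → κ → ℝ) :
    ∑ i, ∑ j, (∑ a, x i a * x j a) ^ 2 = ∑ a, ∑ b, (∑ i, x i a * x i b) ^ 2 := by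
  simp only [sq, Finset.sum_mul_sum, ← Fintype.sum_prod_type']
  refine Fintype.sum_equiv ((Equiv.prodAssoc _ _ _).symm.trans
    ((Equiv.prodComm _ _).trans (Equiv.prodAssoc _ _ _))) _ _ fun p => ?_
  simp only [Equiv.trans_apply, Equiv.prodAssoc_symm_apply, Equiv.prodComm_apply,
    Equiv.prodAssoc_apply, Prod.swap]
  ring

/-- The Gram matrix and the frame operator `∑ qᵢ qᵢᵀ` have the same Frobenius norm, and the
latter is at least `(trace)² / d` by Cauchy–Schwarz on its diagonal. -/
theorem sq_sum_norm_sq_div_le_sum_sum_inner_sq {ι : Type*} [Fintype ι] {d : ℕ}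
    (q : ι → EuclideanSpace ℝ (Fin d)) :
    (∑ i, ‖q i‖ ^ 2) ^ 2 / d ≤ ∑ i, ∑ j, ⟪q i, q j⟫_ℝ ^ 2 := by
  set M : Fin d → Fin d → ℝ := fun a b => ∑ i, q i a * q i b
  have hinner : ∀ i j, ⟪q i, q j⟫_ℝ = ∑ a, q i a * q j a := fun i j => by
    simp [PiLp.inner_apply, mul_comm]
  have htrace : ∑ i, ‖q i‖ ^ 2 = ∑ a, M a a := by
    simp only [M, ← real_inner_self_eq_norm_sq, hinner]
    exact Finset.sum_comm
  have hfrob : ∑ i, ∑ j, ⟪q i, q j⟫_ℝ ^ 2 = ∑ a, ∑ b, M a b ^ 2 := by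
    simp only [hinner, M]
    exact sum_sum_sq_sum_mul_comm _
  have hdiag : ∑ a, M a a ^ 2 ≤ ∑ a, ∑ b, M a b ^ 2 :=
    Finset.sum_le_sum fun a _ =>
      Finset.single_le_sum (f := fun b => M a b ^ 2) (fun _ _ => sq_nonneg _) (Finset.mem_univ a)
  rw [htrace, hfrob]
  refine div_le_of_le_mul₀ (Nat.cast_nonneg _) (by positivity) ?_
  calc (∑ a, M a a) ^ 2 ≤ d * ∑ a, M a a ^ 2 := by
        simpa using sq_sum_le_card_mul_sum_sq (s := Finset.univ) (f := fun a => M a a)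
    _ ≤ (∑ a, ∑ b, M a b ^ 2) * d := by rw [mul_comm]; gcongr

section Energy

variable {s : ℝ} {N : ℕ} {q : Fin N → EuclideanSpace ℝ (Fin 3)}

theorem avgE_eq_of_norm_eq_one (hs0 : s ≠ 0) (hq : ∀ i, ‖q i‖ = 1) :
    avgE s N q = 2 / (N * (N - 1)) *
      ∑ i, ∑ j, if i < j then innerPotential s ⟪q i, q j⟫_ℝ else 0 := by
  simp only [avgE, Vpair_norm_sub_eq_innerPotential hs0 (hq _) (hq _)]

theorem le_avgE_of_quadratic_le (hs0 : s ≠ 0) (hN : 2 ≤ N) (hq : ∀ i, ‖q i‖ = 1)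
    (hinj : Function.Injective q) {a b c : ℝ} (hb : 0 ≤ b) (hc : 0 ≤ c)
    (hp : ∀ t, -1 ≤ t → t < 1 → a + b * t + c * t ^ 2 ≤ innerPotential s t) :
    (N * a + N * c / 3 - (a + b + c)) / (N - 1) ≤ avgE s N q := by
  set p : ℝ → ℝ := fun t => a + b * t + c * t ^ 2
  have hpair : ∀ i j, (if i < j then p ⟪q i, q j⟫_ℝ else 0)
      ≤ if i < j then innerPotential s ⟪q i, q j⟫_ℝ else 0 := fun i j => by
    split_ifs with h
    · have hne : q i ≠ q j := hinj.ne h.ne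
      exact hp _ (neg_one_le_real_inner_of_norm_eq_one (hq i) (hq j))
        ((inner_lt_one_iff_real_of_norm_eq_one (hq i) (hq j)).2 hne)
    · exact le_rfl
  have hsum : ∑ i, ∑ j, p ⟪q i, q j⟫_ℝ
      = N ^ 2 * a + b * ∑ i, ∑ j, ⟪q i, q j⟫_ℝ + c * ∑ i, ∑ j, ⟪q i, q j⟫_ℝ ^ 2 := by
    simp only [p, Finset.sum_add_distrib, ← Finset.mul_sum, Finset.sum_const, Finset.card_univ,
      Fintype.card_fin, nsmul_eq_mul]
    ring
  have hdiag : ∑ i, p ⟪q i, q i⟫_ℝ = N * (a + b + c) := by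
    simp only [p, real_inner_self_eq_norm_sq, hq, one_pow, mul_one, Finset.sum_const,
      Finset.card_univ, Fintype.card_fin, nsmul_eq_mul]
  have hframe := sq_sum_norm_sq_div_le_sum_sum_inner_sq q
  simp only [hq, one_pow, Finset.sum_const, Finset.card_univ, Fintype.card_fin, nsmul_eq_mul,
    mul_one] at hframe
  have hlower : (N ^ 2 * a + c * (N ^ 2 / 3) - N * (a + b + c)) / 2
      ≤ ∑ i, ∑ j, if i < j then innerPotential s ⟪q i, q j⟫_ℝ else 0 := by
    refine le_trans ?_ (Finset.sum_le_sum fun i _ => Finset.sum_le_sum fun j _ => hpair i j)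
    rw [sum_sum_ite_lt_eq _ fun i j => by rw [real_inner_comm], hsum, hdiag]
    have := mul_le_mul_of_nonneg_left hframe hc
    have := mul_nonneg hb (sum_sum_inner_nonneg q)
    push_cast at *
    linarith
  have hN1 : (1 : ℝ) < N := by exact_mod_cast hN
  rw [avgE_eq_of_norm_eq_one hs0 hq]
  calc (N * a + N * c / 3 - (a + b + c)) / (N - 1)
      = 2 / (N * (N - 1)) * ((N ^ 2 * a + c * (N ^ 2 / 3) - N * (a + b + c)) / 2) := by
        field_simp [(by linarith : (N : ℝ) - 1 ≠ 0)]
    _ ≤ _ := by gcongr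

theorem innerPotential_le_avgE (hs : -2 ≤ s) (hs0 : s ≠ 0) (hN : 2 ≤ N)
    (hq : ∀ i, ‖q i‖ = 1) (hinj : Function.Injective q) :
    innerPotential s (-1 / (N - 1)) ≤ avgE s N q := by
  have hN1 : (1 : ℝ) < N := by exact_mod_cast hN
  set t₀ : ℝ := -1 / (N - 1)
  have ht₀N : t₀ * (N - 1) = -1 := div_mul_cancel₀ _ (by linarith)
  have ht₀ : t₀ < 1 := by
    have : t₀ < 0 := div_neg_of_neg_of_pos (by norm_num) (by linarith)
    linarith
  have key := le_avgE_of_quadratic_le hs0 hN hq hinj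
    (a := innerPotential s t₀ - (2 - 2 * t₀) ^ (-s / 2 - 1) * t₀)
    (b := (2 - 2 * t₀) ^ (-s / 2 - 1)) (c := 0)
    (rpow_nonneg (by linarith) _) le_rfl fun t _ ht => by
      have := (convexOn_innerPotential hs hs0).add_mul_sub_le_of_hasDerivAt ht₀ ht
        (hasDerivAt_innerPotential hs0 ht₀)
      linarith
  convert key using 1
  rw [eq_div_iff (by linarith)]
  linear_combination (2 - 2 * t₀) ^ (-s / 2 - 1) * ht₀N

theorem le_avgE_six (hs : -2 ≤ s) (hs0 : s ≠ 0) {q : Fin 6 → EuclideanSpace ℝ (Fin 3)}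
    (hq : ∀ i, ‖q i‖ = 1) (hinj : Function.Injective q) :
    (innerPotential s (-1) + 4 * innerPotential s 0) / 5 ≤ avgE s 6 q := by
  have hd : ∀ t < 1, HasDerivAt (innerPotential s) ((2 - 2 * t) ^ (-s / 2 - 1)) t :=
    fun t ht => hasDerivAt_innerPotential hs0 ht
  have hc : 0 ≤ innerPotential s (-1) - innerPotential s 0 + (2 - 2 * 0) ^ (-s / 2 - 1) := by
    have := (convexOn_innerPotential hs hs0).add_mul_sub_le_of_hasDerivAt
      (show (0 : ℝ) < 1 by norm_num) (show (-1 : ℝ) < 1 by norm_num) (hd 0 one_pos)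
    linarith
  have key := le_avgE_of_quadratic_le hs0 (by norm_num) hq hinj (a := innerPotential s 0)
    (b := (2 - 2 * 0) ^ (-s / 2 - 1))
    (rpow_nonneg (by norm_num) _) hc
    fun t hlo ht => by
      have := hermite_le_of_convexOn_deriv hd (convexOn_deriv_innerPotential hs)
        (show (-1 : ℝ) < 0 by norm_num) one_pos hlo ht
      simp only [sub_zero, neg_one_sq, div_one] at this
      linarith
  convert key using 1
  push_cast
  ring

end Energy

theorem exists_injective_norm_eq_one (N : ℕ) :
    ∃ q : Fin N → EuclideanSpace ℝ (Fin 3), (∀ i, ‖q i‖ = 1) ∧ Function.Injective q := by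
  have hangle : ∀ k : Fin N, (k : ℝ) / N ∈ Icc 0 π := fun k => by
    have hk : (k : ℝ) < N := by exact_mod_cast k.isLt
    refine ⟨by positivity, (div_le_one_of_le₀ hk.le (by positivity)).trans ?_⟩
    linarith [pi_gt_three]
  refine ⟨fun k => !₂[cos (k / N), sin (k / N), 0], fun k => ?_, fun k l h => ?_⟩
  · simp [EuclideanSpace.norm_eq, Fin.sum_univ_three]
  · have hcos := congrArg (· 0) h
    simp only [Matrix.cons_val_zero] at hcos
    have := injOn_cos (hangle k) (hangle l) hcos
    have hN : (N : ℝ) ≠ 0 := by exact_mod_cast (Fin.pos k).ne'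
    exact Fin.ext (by exact_mod_cast (div_left_inj' hN).1 this)

section vmin

variable {s : ℝ} {N : ℕ}

theorem le_vmin {L : ℝ} (h : ∀ q : Fin N → EuclideanSpace ℝ (Fin 3), (∀ i, ‖q i‖ = 1) →
    Function.Injective q → L ≤ avgE s N q) : L ≤ vmin s N := by
  obtain ⟨q₀, hq₀, hinj₀⟩ := exists_injective_norm_eq_one N
  exact le_csInf ⟨_, q₀, hq₀, hinj₀, rfl⟩ fun _ ⟨q, hq, hinj, hE⟩ => hE ▸ h q hq hinj

theorem vmin_le_avgE (hs : -2 ≤ s) (hs0 : s ≠ 0) (hN : 2 ≤ N)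
    {q : Fin N → EuclideanSpace ℝ (Fin 3)} (hq : ∀ i, ‖q i‖ = 1) (hinj : Function.Injective q) :
    vmin s N ≤ avgE s N q :=
  csInf_le ⟨_, fun _ ⟨_, hq, hinj, hE⟩ => hE ▸ innerPotential_le_avgE hs hs0 hN hq hinj⟩
    ⟨q, hq, hinj, rfl⟩

end vmin

noncomputable def bipyramid : Fin 5 → EuclideanSpace ℝ (Fin 3) :=
  ![!₂[0, 0, 1], !₂[0, 0, -1], !₂[1, 0, 0], !₂[-1 / 2, √3 / 2, 0], !₂[-1 / 2, -(√3 / 2), 0]]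

theorem norm_bipyramid (i : Fin 5) : ‖bipyramid i‖ = 1 := by
  fin_cases i <;> simp [bipyramid, EuclideanSpace.norm_eq, Fin.sum_univ_three] <;> ring_nf <;>
    norm_num

theorem bipyramid_injective : Function.Injective bipyramid := by
  intro i j h
  fin_cases i <;> fin_cases j <;> simp [bipyramid] at h ⊢ <;> norm_num at h <;>
    linarith [show 0 < √3 by positivity]

theorem avgE_bipyramid {s : ℝ} (hs0 : s ≠ 0) :
    avgE s 5 bipyramid = (innerPotential s (-1) + 6 * innerPotential s 0
      + 3 * innerPotential s (-1 / 2)) / 10 := by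
  rw [avgE_eq_of_norm_eq_one hs0 norm_bipyramid]
  simp only [Nat.cast_ofNat, bipyramid, PiLp.inner_apply, RCLike.inner_apply, ringHom_apply,
    Fin.sum_univ_three, Fin.isValue, Fin.sum_univ_five, not_lt_zero, ↓reduceIte, Fin.lt_one_iff,
    Nat.reduceAdd, Matrix.cons_val_one, Matrix.cons_val_zero, zero_mul, add_zero, Matrix.cons_val,
    neg_mul, one_mul, zero_add, Fin.reduceLT, mul_zero, neg_zero, one_ne_zero, Fin.reduceEq,
    lt_self_iff_false, mul_one]
  ring_nf
  norm_num
  ring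

theorem stmt18 (s : ℝ) (hs : -2 < s) (hs0 : s ≠ 0) :
    vmin s 4 - 2 * vmin s 5 + vmin s 6 ≥
      (1 / s) * ((3 / 8 : ℝ) ^ (s / 2) - (2 / 5) * (1 / 2 : ℝ) ^ (s / 2)
        - (3 / 5) * (1 / 3 : ℝ) ^ (s / 2)) := by
  have h4 : innerPotential s (-1 / 3) ≤ vmin s 4 := le_vmin fun q hq hinj => by
    simpa [show (4 : ℝ) - 1 = 3 by norm_num] using
      innerPotential_le_avgE hs.le hs0 (by norm_num) hq hinj
  have h5 := (vmin_le_avgE hs.le hs0 (by norm_num) norm_bipyramid bipyramid_injective).trans_eq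
    (avgE_bipyramid hs0)
  have h6 := le_vmin fun q hq hinj => le_avgE_six hs.le hs0 hq hinj
  rw [innerPotential_eq (by norm_num)] at h4
  rw [innerPotential_eq (t := 0) (by norm_num), innerPotential_eq (t := -1 / 2) (by norm_num)]
    at h5
  rw [innerPotential_eq (t := 0) (by norm_num)] at h6
  norm_num at h4 h5 h6
  have hrhs : (1 / s) * ((3 / 8 : ℝ) ^ (s / 2) - (2 / 5) * (1 / 2 : ℝ) ^ (s / 2)
      - (3 / 5) * (1 / 3 : ℝ) ^ (s / 2)) = ((3 / 8 : ℝ) ^ (s / 2) - 1) / s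
      - 2 / 5 * (((1 / 2 : ℝ) ^ (s / 2) - 1) / s) - 3 / 5 * (((1 / 3 : ℝ) ^ (s / 2) - 1) / s) := by
    ring
  linarith
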